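/- Let d ≥ 1 be an integer and let P, Q ⊂ ℝ^d be finite point sets that do not share any coordinate, with |P| + |Q| ≥ d + 2. If sconv(P) ∩ sconv(Q) ≠ ∅, then there exist subsets P' ⊆ P and Q' ⊆ Q with |P'| + |Q'| = d + 2 such that sconv(P') ∩ sconv(Q') ≠ ∅. -/

import Mathlib

noncomputable def stairPath : (d : ℕ) → (Fin d → ℝ) → (Fin d → ℝ) → Set (Fin d → ℝ)
  | 0, _, _ => Set.univ
  | (d+1), a, b =>
    if a (Fin.last d) ≤ b (Fin.last d) then
      segment ℝ a (Fin.snoc (Fin.init a) (b (Fin.last d))) ∪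
        (fun z => Fin.snoc z (b (Fin.last d))) '' stairPath d (Fin.init a) (Fin.init b)
    else
      segment ℝ b (Fin.snoc (Fin.init b) (a (Fin.last d))) ∪
        (fun z => Fin.snoc z (a (Fin.last d))) '' stairPath d (Fin.init b) (Fin.init a)

def StairConvex {d : ℕ} (S : Set (Fin d → ℝ)) : Prop :=
  ∀ a ∈ S, ∀ b ∈ S, stairPath d a b ⊆ S

def sconv {d : ℕ} (X : Set (Fin d → ℝ)) : Set (Fin d → ℝ) :=
  ⋂₀ {S : Set (Fin d → ℝ) | StairConvex S ∧ X ⊆ S}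

/-!
Stair-convex hulls in `ℝ^(d+1)` unfold along the last coordinate, the height: `x ∈ sconv X` iff
some point of `X` has height at least `x_last` and `init x` lies in the stair-convex hull of the
projections to `ℝ^d` of the points of `X` of height at most `x_last`. If `x` lies in both hulls,
induction gives a common point `y` of the hulls of at most `d + 2` projected points; lift them back
and put `y` at the largest height `t` they attain. The side not attaining `t` gets one extra point,
of height at least `x_last ≥ t`, which exists because `x` lies in its hull. So `d + 3` points
suffice, and monotonicity of `sconv` pads the subsets to exactly the required size.
-/

open Set

section

variable {d : ℕ}

theorem segment_snoc_snoc (v : Fin d → ℝ) (s t : ℝ) :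
    segment ℝ (Fin.snoc v s : Fin (d + 1) → ℝ) (Fin.snoc v t) =
      (Fin.snoc v ·) '' segment ℝ s t := by
  have hline : ∀ r : ℝ,
      AffineMap.lineMap (Fin.snoc v 0 : Fin (d + 1) → ℝ) (Fin.snoc v 1) r = Fin.snoc v r := by
    intro r
    ext i
    induction i using Fin.lastCases <;> simp [AffineMap.lineMap_apply]
  rw [← hline s, ← hline t, ← image_segment]
  simp only [hline]

theorem stairPath_succ_of_le {a b : Fin (d + 1) → ℝ} (h : a (Fin.last d) ≤ b (Fin.last d)) :
    stairPath (d + 1) a b =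
      (Fin.snoc (Fin.init a) ·) '' Icc (a (Fin.last d)) (b (Fin.last d)) ∪
        (Fin.snoc · (b (Fin.last d))) '' stairPath d (Fin.init a) (Fin.init b) := by
  rw [stairPath, if_pos h, ← segment_eq_Icc h, ← segment_snoc_snoc, Fin.snoc_init_self]

theorem stairPath_succ_of_lt {a b : Fin (d + 1) → ℝ} (h : b (Fin.last d) < a (Fin.last d)) :
    stairPath (d + 1) a b = stairPath (d + 1) b a := by
  simp only [stairPath, if_neg h.not_ge, if_pos h.le]

theorem StairConvex.of_le {S : Set (Fin (d + 1) → ℝ)}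
    (h : ∀ a ∈ S, ∀ b ∈ S, a (Fin.last d) ≤ b (Fin.last d) → stairPath (d + 1) a b ⊆ S) :
    StairConvex S := by
  intro a ha b hb
  rcases le_or_gt (a (Fin.last d)) (b (Fin.last d)) with hab | hba
  · exact h a ha b hb hab
  · rw [stairPath_succ_of_lt hba]
    exact h b hb a ha hba.le

theorem StairConvex.preimage_snoc {T : Set (Fin (d + 1) → ℝ)} (hT : StairConvex T) (c : ℝ) :
    StairConvex ((Fin.snoc · c) ⁻¹' T) := by
  intro a ha b hb
  rw [← image_subset_iff]
  have hpath := hT _ ha _ hb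
  rw [stairPath_succ_of_le (by simp)] at hpath
  simpa using subset_union_right.trans hpath

theorem subset_sconv (X : Set (Fin d → ℝ)) : X ⊆ sconv X :=
  fun _ hx => mem_sInter.2 fun _ hT => hT.2 hx

theorem sconv_min {X T : Set (Fin d → ℝ)} (hT : StairConvex T) (hXT : X ⊆ T) : sconv X ⊆ T :=
  sInter_subset_of_mem ⟨hT, hXT⟩

theorem stairConvex_sconv (X : Set (Fin d → ℝ)) : StairConvex (sconv X) :=
  fun _ ha _ hb _ hz => mem_sInter.2 fun T hT => hT.1 _ (ha T hT) _ (hb T hT) hz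

theorem sconv_mono {X Y : Set (Fin d → ℝ)} (h : X ⊆ Y) : sconv X ⊆ sconv Y :=
  sconv_min (stairConvex_sconv Y) (h.trans (subset_sconv Y))

theorem nonempty_of_mem_sconv {X : Set (Fin d → ℝ)} {x : Fin d → ℝ} (hx : x ∈ sconv X) :
    X.Nonempty := by
  by_contra hX
  rw [not_nonempty_iff_eq_empty] at hX
  exact sconv_min (T := ∅) (fun a ha => ha.elim) hX.subset hx

def projBelow (X : Set (Fin (d + 1) → ℝ)) (t : ℝ) : Set (Fin d → ℝ) :=
  Fin.init '' {p ∈ X | p (Fin.last d) ≤ t}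

theorem projBelow_mono (X : Set (Fin (d + 1) → ℝ)) {s t : ℝ} (h : s ≤ t) :
    projBelow X s ⊆ projBelow X t :=
  image_mono fun _ hp => ⟨hp.1, hp.2.trans h⟩

theorem stairConvex_setOf_sconv_projBelow (X : Set (Fin (d + 1) → ℝ)) :
    StairConvex {x | (∃ q ∈ X, x (Fin.last d) ≤ q (Fin.last d)) ∧
      Fin.init x ∈ sconv (projBelow X (x (Fin.last d)))} := by
  refine StairConvex.of_le fun a ⟨_, ha⟩ b ⟨⟨q, hq, hbq⟩, hb⟩ hab => ?_
  have ha' : Fin.init a ∈ sconv (projBelow X (b (Fin.last d))) :=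
    sconv_mono (projBelow_mono X hab) ha
  rw [stairPath_succ_of_le hab]
  rintro _ (⟨t, ⟨hat, htb⟩, rfl⟩ | ⟨z, hz, rfl⟩) <;>
    simp only [mem_ofPred_eq, Fin.snoc_last, Fin.init_snoc]
  · exact ⟨⟨q, hq, htb.trans hbq⟩, sconv_mono (projBelow_mono X hat) ha⟩
  · exact ⟨⟨q, hq, hbq⟩, stairConvex_sconv _ _ ha' _ hb hz⟩

theorem mem_sconv_succ_iff {X : Set (Fin (d + 1) → ℝ)} {x : Fin (d + 1) → ℝ} :
    x ∈ sconv X ↔ (∃ q ∈ X, x (Fin.last d) ≤ q (Fin.last d)) ∧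
      Fin.init x ∈ sconv (projBelow X (x (Fin.last d))) := by
  constructor
  · refine fun hx => sconv_min (stairConvex_setOf_sconv_projBelow X) (fun p hp => ?_) hx
    exact ⟨⟨p, hp, le_rfl⟩, subset_sconv _ ⟨p, ⟨hp, le_rfl⟩, rfl⟩⟩
  · rintro ⟨⟨q, hq, hxq⟩, hx⟩
    refine mem_sInter.2 fun T => ?_
    rintro ⟨hT, hXT⟩
    -- every point of `X` below height `x_last` reaches that height along its stair-path to `q`
    have hproj : projBelow X (x (Fin.last d)) ⊆ (Fin.snoc · (x (Fin.last d))) ⁻¹' T := by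
      rintro _ ⟨p, ⟨hp, hpx⟩, rfl⟩
      refine hT p (hXT hp) q (hXT hq) ?_
      rw [stairPath_succ_of_le (hpx.trans hxq)]
      exact Or.inl ⟨_, ⟨hpx, hxq⟩, rfl⟩
    simpa using sconv_min (hT.preimage_snoc _) hproj hx

theorem snoc_mem_sconv {A X : Set (Fin (d + 1) → ℝ)} {y : Fin d → ℝ} {t : ℝ} (hAX : A ⊆ X)
    (hA : ∀ a ∈ A, a (Fin.last d) ≤ t) (hX : ∃ q ∈ X, t ≤ q (Fin.last d))
    (hy : y ∈ sconv (Fin.init '' A)) : Fin.snoc y t ∈ sconv X := by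
  rw [mem_sconv_succ_iff, Fin.snoc_last, Fin.init_snoc]
  exact ⟨hX, sconv_mono (image_mono fun a ha => mem_sep (hAX ha) (hA a ha)) hy⟩

theorem snoc_mem_sconv_insert_inter {A B : Set (Fin (d + 1) → ℝ)} {p : Fin (d + 1) → ℝ}
    {y : Fin d → ℝ} {t : ℝ} (hA : ∀ a ∈ A, a (Fin.last d) ≤ t) (hB : ∀ b ∈ B, b (Fin.last d) ≤ t)
    (hBt : ∃ b ∈ B, t ≤ b (Fin.last d)) (hp : t ≤ p (Fin.last d))
    (hy : y ∈ sconv (Fin.init '' A) ∩ sconv (Fin.init '' B)) :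
    Fin.snoc y t ∈ sconv (insert p A) ∩ sconv B :=
  ⟨snoc_mem_sconv (subset_insert p A) hA ⟨p, mem_insert p A, hp⟩ hy.1,
    snoc_mem_sconv subset_rfl hB hBt hy.2⟩

end

theorem Finset.exists_subset_image_eq_card_eq {α β : Type*} [DecidableEq β] {f : α → β}
    {s : Finset β} {t : Finset α} (h : s ⊆ t.image f) :
    ∃ u ⊆ t, u.image f = s ∧ u.card = s.card := by
  obtain ⟨u, hut, hinj, rfl⟩ :=
    Finset.exists_subset_injOn_image_eq_of_surjOn (f := f) (↑t) s fun b hb => by simpa using h hb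
  exact ⟨u, Finset.coe_subset.1 hut, rfl, (Finset.card_image_of_injOn hinj).symm⟩

theorem Finset.exists_subsuperset_card_add_eq {α β : Type*} {P₁ P : Finset α} {Q₁ Q : Finset β}
    {n : ℕ} (hP : P₁ ⊆ P) (hQ : Q₁ ⊆ Q) (hn₁ : P₁.card + Q₁.card ≤ n)
    (hn : n ≤ P.card + Q.card) :
    ∃ P', P₁ ⊆ P' ∧ P' ⊆ P ∧ ∃ Q', Q₁ ⊆ Q' ∧ Q' ⊆ Q ∧ P'.card + Q'.card = n := by
  have hP₁ := Finset.card_le_card hP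
  have hQ₁ := Finset.card_le_card hQ
  obtain ⟨P', hP₁P', hP'P, hP'⟩ :=
    Finset.exists_subsuperset_card_eq hP (n := min P.card (n - Q₁.card)) (by omega) (by omega)
  obtain ⟨Q', hQ₁Q', hQ'Q, hQ'⟩ :=
    Finset.exists_subsuperset_card_eq hQ (n := n - P'.card) (by omega) (by omega)
  exact ⟨P', hP₁P', hP'P, Q', hQ₁Q', hQ'Q, by omega⟩

theorem exists_subsets_card_add_le_of_init_mem_sconv_inter {d : ℕ}
    {A B P Q : Finset (Fin (d + 1) → ℝ)} {L : ℝ} {y : Fin d → ℝ} (hAP : A ⊆ P) (hBQ : B ⊆ Q)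
    (hAL : ∀ a ∈ A, a (Fin.last d) ≤ L) (hBL : ∀ b ∈ B, b (Fin.last d) ≤ L)
    (hP : ∃ p ∈ P, L ≤ p (Fin.last d)) (hQ : ∃ q ∈ Q, L ≤ q (Fin.last d))
    (hy : y ∈ sconv (Fin.init '' (A : Set (Fin (d + 1) → ℝ))) ∩
      sconv (Fin.init '' (B : Set (Fin (d + 1) → ℝ)))) :
    ∃ P' ⊆ P, ∃ Q' ⊆ Q, P'.card + Q'.card ≤ A.card + B.card + 1 ∧
      (sconv (↑P' : Set (Fin (d + 1) → ℝ)) ∩ sconv ↑Q').Nonempty := by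
  classical
  obtain ⟨p, hp, hLp⟩ := hP
  obtain ⟨q, hq, hLq⟩ := hQ
  obtain ⟨a, haA, ha⟩ := Finset.exists_max_image A (· (Fin.last d))
    (Finset.coe_nonempty.1 (image_nonempty.1 (nonempty_of_mem_sconv hy.1)))
  obtain ⟨b, hbB, hb⟩ := Finset.exists_max_image B (· (Fin.last d))
    (Finset.coe_nonempty.1 (image_nonempty.1 (nonempty_of_mem_sconv hy.2)))
  rcases le_total (a (Fin.last d)) (b (Fin.last d)) with hab | hba
  · refine ⟨insert p A, Finset.insert_subset hp hAP, B, hBQ, ?_, Fin.snoc y (b (Fin.last d)), ?_⟩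
    · have := Finset.card_insert_le p A
      omega
    · rw [Finset.coe_insert]
      exact snoc_mem_sconv_insert_inter (fun a' ha' => (ha a' ha').trans hab) hb
        ⟨b, hbB, le_rfl⟩ ((hBL b hbB).trans hLp) hy
  · refine ⟨A, hAP, insert q B, Finset.insert_subset hq hBQ, ?_, Fin.snoc y (a (Fin.last d)), ?_⟩
    · have := Finset.card_insert_le q B
      omega
    · rw [Finset.coe_insert, inter_comm]
      exact snoc_mem_sconv_insert_inter (fun b' hb' => (hb b' hb').trans hba) ha
        ⟨a, haA, le_rfl⟩ ((hAL a haA).trans hLq) ⟨hy.2, hy.1⟩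

theorem exists_subsets_card_add_le_of_sconv_inter_nonempty :
    ∀ {d : ℕ} (P Q : Finset (Fin d → ℝ)), (sconv (↑P : Set (Fin d → ℝ)) ∩ sconv ↑Q).Nonempty →
      ∃ P' ⊆ P, ∃ Q' ⊆ Q, P'.card + Q'.card ≤ d + 2 ∧
        (sconv (↑P' : Set (Fin d → ℝ)) ∩ sconv ↑Q').Nonempty
  | 0, P, Q, ⟨x, hxP, hxQ⟩ => by
    obtain ⟨p, hp⟩ := nonempty_of_mem_sconv hxP
    obtain ⟨q, hq⟩ := nonempty_of_mem_sconv hxQ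
    refine ⟨{p}, by simpa using hp, {q}, by simpa using hq, by simp, p,
      subset_sconv _ (Finset.mem_singleton_self p), ?_⟩
    rw [Subsingleton.elim p q]
    exact subset_sconv _ (Finset.mem_singleton_self q)
  | d + 1, P, Q, ⟨x, hxP, hxQ⟩ => by
    classical
    rw [mem_sconv_succ_iff] at hxP hxQ
    set L := x (Fin.last d)
    have hproj (X : Finset (Fin (d + 1) → ℝ)) :
        projBelow ↑X L = ((X.filter (· (Fin.last d) ≤ L)).image Fin.init : Set (Fin d → ℝ)) := by
      simp [projBelow]
    obtain ⟨A₀, hA₀, B₀, hB₀, hcard, y, hyA, hyB⟩ :=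
      exists_subsets_card_add_le_of_sconv_inter_nonempty _ _
        ⟨Fin.init x, hproj P ▸ hxP.2, hproj Q ▸ hxQ.2⟩
    obtain ⟨A, hA, rfl, hAcard⟩ := Finset.exists_subset_image_eq_card_eq hA₀
    obtain ⟨B, hB, rfl, hBcard⟩ := Finset.exists_subset_image_eq_card_eq hB₀
    rw [Finset.coe_image] at hyA hyB
    obtain ⟨P', hP', Q', hQ', hcard', hne⟩ := exists_subsets_card_add_le_of_init_mem_sconv_inter
      (hA.trans (Finset.filter_subset _ _)) (hB.trans (Finset.filter_subset _ _))
      (fun a ha => (Finset.mem_filter.1 (hA ha)).2) (fun b hb => (Finset.mem_filter.1 (hB hb)).2)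
      hxP.1 hxQ.1 ⟨hyA, hyB⟩
    exact ⟨P', hP', Q', hQ', by omega, hne⟩

theorem sconv_kirchberger_general (d : ℕ) (P Q : Finset (Fin d → ℝ))
    (hcard : d + 2 ≤ P.card + Q.card)
    (hne : (sconv (↑P : Set (Fin d → ℝ)) ∩ sconv (↑Q : Set (Fin d → ℝ))).Nonempty) :
    ∃ P' ⊆ P, ∃ Q' ⊆ Q, P'.card + Q'.card = d + 2 ∧
      (sconv (↑P' : Set (Fin d → ℝ)) ∩ sconv (↑Q' : Set (Fin d → ℝ))).Nonempty := by
  obtain ⟨P₁, hP₁, Q₁, hQ₁, hcard₁, x, hxP, hxQ⟩ :=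
    exists_subsets_card_add_le_of_sconv_inter_nonempty P Q hne
  obtain ⟨P', hP₁P', hP'P, Q', hQ₁Q', hQ'Q, hcard'⟩ :=
    Finset.exists_subsuperset_card_add_eq hP₁ hQ₁ hcard₁ hcard
  exact ⟨P', hP'P, Q', hQ'Q, hcard', x, sconv_mono (Finset.coe_subset.2 hP₁P') hxP,
    sconv_mono (Finset.coe_subset.2 hQ₁Q') hxQ⟩

/-- A Kirchberger-type theorem for stair-convexity: if `P, Q ⊂ ℝ^d` share no coordinate,
`|P| + |Q| ≥ d + 2`, and their stair-convex hulls intersect, then there are subsets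
`P' ⊆ P`, `Q' ⊆ Q` with `|P'| + |Q'| = d + 2` whose stair-convex hulls intersect. -/
theorem sconv_kirchberger (d : ℕ) (hd : 1 ≤ d) (P Q : Finset (Fin d → ℝ))
    (hshare : ∀ i : Fin d, ∀ p ∈ P, ∀ q ∈ Q, p i ≠ q i)
    (hcard : d + 2 ≤ P.card + Q.card)
    (hne : (sconv (↑P : Set (Fin d → ℝ)) ∩ sconv (↑Q : Set (Fin d → ℝ))).Nonempty) :
    ∃ P' ⊆ P, ∃ Q' ⊆ Q, P'.card + Q'.card = d + 2 ∧
      (sconv (↑P' : Set (Fin d → ℝ)) ∩ sconv (↑Q' : Set (Fin d → ℝ))).Nonempty :=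
  sconv_kirchberger_general d P Q hcard hne
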